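/- arXiv:2011.04176 — 2 statements merged into one kernel-verified Lean document; each statement's English description precedes it below -/
import Mathlib

section
/- If the conditional-independence relation satisfies the intersection property, then any target T has a unique Markov boundary: any two inclusion-minimal Markov blankets of T coincide. -/
open Set

/-- `Z` is a Markov blanket of `T` w.r.t. the conditional-independence relation `CI`. -/
def IsMarkovBlanket {V : Type*} (CI : Set V → Set V → Set V → Prop) (T : V) (Z : Set V) : Prop :=
  Z ⊆ Set.univ \ {T} ∧ CI {T} ((Set.univ \ Z) \ {T}) Z

/-- A Markov boundary: an inclusion-minimal Markov blanket. -/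
def IsMarkovBoundary {V : Type*} (CI : Set V → Set V → Set V → Prop) (T : V) (Z : Set V) : Prop :=
  IsMarkovBlanket CI T Z ∧ ∀ Z' ⊂ Z, ¬ IsMarkovBlanket CI T Z'

/-- `X` and `Y` contain equivalent information about `T` conditioned on `Z`. -/
def EquivInfo {V : Type*} (CI : Set V → Set V → Set V → Prop) (T : V) (X Y Z : Set V) : Prop :=
  ¬ CI {T} X Z ∧ ¬ CI {T} Y Z ∧ CI {T} X (Y ∪ Z) ∧ CI {T} Y (X ∪ Z)

/-! Under weak union and intersection the Markov blankets of `T` are closed under `∩`, so two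
minimal ones both equal their intersection. With `A = M₁ \ M₂`, `B = M₂ \ M₁`, `C = M₁ ∩ M₂` and `R`
the rest of `V \ {T}`, the blanket `M₂` gives `T ⫫ R ∪ A | C ∪ B`, weak union on the blanket `M₁`
gives `T ⫫ B | C ∪ R ∪ A`, and intersection combines them into `T ⫫ R ∪ A ∪ B | C`. -/

section

variable {V : Type*} {CI : Set V → Set V → Set V → Prop} {T : V}

theorem IsMarkovBlanket.notMem {Z : Set V} (h : IsMarkovBlanket CI T Z) : T ∉ Z :=
  fun hT => (h.1 hT).2 rfl

theorem IsMarkovBlanket.inter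
    (weakUnion : ∀ A B C Z : Set V, CI A (B ∪ C) Z → CI A B (Z ∪ C))
    (inter : ∀ A B C Z : Set V, CI A B (Z ∪ C) → CI A C (Z ∪ B) → CI A (B ∪ C) Z)
    {M₁ M₂ : Set V} (h₁ : IsMarkovBlanket CI T M₁) (h₂ : IsMarkovBlanket CI T M₂) :
    IsMarkovBlanket CI T (M₁ ∩ M₂) := by
  have hT₁ := h₁.notMem
  have hT₂ := h₂.notMem
  set R : Set V := (M₁ ∪ M₂ ∪ {T})ᶜ
  set A := M₁ \ M₂
  set B := M₂ \ M₁
  set C := M₁ ∩ M₂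
  have hM₁ : (univ \ M₁) \ {T} = B ∪ R ∧ M₁ = C ∪ A := by
    constructor <;> ext x <;> grind
  have hM₂ : (univ \ M₂) \ {T} = R ∪ A ∧ M₂ = C ∪ B := by
    constructor <;> ext x <;> grind
  have hC : (univ \ C) \ {T} = (R ∪ A) ∪ B := by
    ext x; grind
  have hRA : CI {T} (R ∪ A) (C ∪ B) := by rw [← hM₂.1, ← hM₂.2]; exact h₂.2
  have hB : CI {T} B (C ∪ (R ∪ A)) := by
    have h₁' := h₁.2
    rw [hM₁.1, hM₁.2] at h₁'
    simpa only [union_assoc, union_comm A] using weakUnion _ _ _ _ h₁'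
  exact ⟨inter_subset_left.trans h₁.1, hC ▸ inter _ _ _ _ hRA hB⟩

theorem IsMarkovBoundary.eq_of_subset {M Z : Set V} (hM : IsMarkovBoundary CI T M)
    (hZ : IsMarkovBlanket CI T Z) (hZM : Z ⊆ M) : Z = M :=
  of_not_not fun hne => hM.2 Z (hZM.ssubset_of_ne hne) hZ

end

theorem unique_boundary_of_intersection_property_general {V : Type*}
    (CI : Set V → Set V → Set V → Prop)
    (weakUnion : ∀ A B C Z : Set V, CI A (B ∪ C) Z → CI A B (Z ∪ C))
(inter : ∀ A B C Z : Set V, CI A B (Z ∪ C) → CI A C (Z ∪ B) → CI A (B ∪ C) Z)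
    (T : V) (M₁ M₂ : Set V)
    (h₁ : IsMarkovBoundary CI T M₁) (h₂ : IsMarkovBoundary CI T M₂) :
    M₁ = M₂ := by
  have hM := h₁.1.inter weakUnion inter h₂.1
  exact (h₁.eq_of_subset hM inter_subset_left).symm.trans (h₂.eq_of_subset hM inter_subset_right)

theorem unique_boundary_of_intersection_property {V : Type*} [Fintype V]
    (CI : Set V → Set V → Set V → Prop)
(symm : ∀ A B C : Set V, CI A B C → CI B A C)
    (decomp : ∀ A B C Z : Set V, CI A (B ∪ C) Z → CI A B Z)
    (weakUnion : ∀ A B C Z : Set V, CI A (B ∪ C) Z → CI A B (Z ∪ C))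
    (contraction : ∀ A B C Z : Set V, CI A B (Z ∪ C) → CI A C Z → CI A (B ∪ C) Z)
(inter : ∀ A B C Z : Set V, CI A B (Z ∪ C) → CI A C (Z ∪ B) → CI A (B ∪ C) Z)
    (T : V) (M₁ M₂ : Set V)
    (h₁ : IsMarkovBoundary CI T M₁) (h₂ : IsMarkovBoundary CI T M₂) :
    M₁ = M₂ :=
  unique_boundary_of_intersection_property_general CI weakUnion inter T M₁ M₂ h₁ h₂
end

section
/- From T ⊥ U \ MB₁ \ {T} | MB₁ and T ⊥ MB₁ \ MB₂ | MB₁ ∩ MB₂, the contraction property yields T ⊥ (U \ MB₁ \ {T}) ∪ (MB₁ \ MB₂) | MB₁ ∩ MB₂, i.e., T ⊥ U \ (MB₁ ∩ MB₂) \ {T} | MB₁ ∩ MB₂ whenever MB₂ ⊆ MB₁ ∪ (U \ MB₁), hence MB₁ ∩ MB₂ is a Markov blanket of T. -/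
open Set

theorem Set.univ_diff_diff_singleton_union_diff {α : Type*} {A : Set α} {t : α} (ht : t ∉ A)
    (B : Set α) : ((univ \ A) \ {t}) ∪ (A \ B) = (univ \ (A ∩ B)) \ {t} := by
  ext x
  by_cases hx : x ∈ A
  · have : x ≠ t := fun h => ht (h ▸ hx)
    simp [hx, this]
  · simp [hx]

namespace IsMarkovBlanket

variable {V : Type*} {CI : Set V → Set V → Set V → Prop} {T : V} {Z : Set V}

theorem notMem_s13 (hZ : IsMarkovBlanket CI T Z) : T ∉ Z :=
  fun hT => (hZ.1 hT).2 rfl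

/-- Contraction applied to the blanket property of `Z`, read with `Z = (Z ∩ W) ∪ (Z \ W)`. -/
theorem ci_union_diff
    (contraction : ∀ A B C Z : Set V, CI A B (Z ∪ C) → CI A C Z → CI A (B ∪ C) Z)
    (hZ : IsMarkovBlanket CI T Z) {W : Set V} (hW : CI {T} (Z \ W) (Z ∩ W)) :
    CI {T} (((univ \ Z) \ {T}) ∪ (Z \ W)) (Z ∩ W) := by
  refine contraction _ _ _ _ ?_ hW
  rw [inter_union_sdiff]
  exact hZ.2

theorem inter_s13
    (contraction : ∀ A B C Z : Set V, CI A B (Z ∪ C) → CI A C Z → CI A (B ∪ C) Z)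
    (hZ : IsMarkovBlanket CI T Z) {W : Set V} (hW : CI {T} (Z \ W) (Z ∩ W)) :
    IsMarkovBlanket CI T (Z ∩ W) := by
  refine ⟨inter_subset_left.trans hZ.1, ?_⟩
  rw [← univ_diff_diff_singleton_union_diff hZ.notMem_s13]
  exact hZ.ci_union_diff contraction hW

end IsMarkovBlanket

theorem contraction_yields_blanket_intersection_general {V : Type*}
    (CI : Set V → Set V → Set V → Prop)
    (contraction : ∀ A B C Z : Set V, CI A B (Z ∪ C) → CI A C Z → CI A (B ∪ C) Z)
    (T : V) (MB₁ MB₂ : Set V)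
    (h₁ : IsMarkovBlanket CI T MB₁)
    (h : CI {T} (MB₁ \ MB₂) (MB₁ ∩ MB₂)) :
    CI {T} (((Set.univ \ MB₁) \ {T}) ∪ (MB₁ \ MB₂)) (MB₁ ∩ MB₂) ∧
    CI {T} ((Set.univ \ (MB₁ ∩ MB₂)) \ {T}) (MB₁ ∩ MB₂) ∧
    IsMarkovBlanket CI T (MB₁ ∩ MB₂) :=
  have hinter := h₁.inter_s13 contraction h
  ⟨h₁.ci_union_diff contraction h, hinter.2, hinter⟩

theorem contraction_yields_blanket_intersection {V : Type*} [Fintype V]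
    (CI : Set V → Set V → Set V → Prop)
(symm : ∀ A B C : Set V, CI A B C → CI B A C)
    (decomp : ∀ A B C Z : Set V, CI A (B ∪ C) Z → CI A B Z)
    (weakUnion : ∀ A B C Z : Set V, CI A (B ∪ C) Z → CI A B (Z ∪ C))
    (contraction : ∀ A B C Z : Set V, CI A B (Z ∪ C) → CI A C Z → CI A (B ∪ C) Z)
    (T : V) (MB₁ MB₂ : Set V)
    (h₁ : IsMarkovBlanket CI T MB₁) (h₂ : IsMarkovBlanket CI T MB₂)
    (h : CI {T} (MB₁ \ MB₂) (MB₁ ∩ MB₂)) :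
    CI {T} (((Set.univ \ MB₁) \ {T}) ∪ (MB₁ \ MB₂)) (MB₁ ∩ MB₂) ∧
    CI {T} ((Set.univ \ (MB₁ ∩ MB₂)) \ {T}) (MB₁ ∩ MB₂) ∧
    IsMarkovBlanket CI T (MB₁ ∩ MB₂) :=
  contraction_yields_blanket_intersection_general CI contraction T MB₁ MB₂ h₁ h
end
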